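/- arXiv:1806.01702 — 2 statements merged into one kernel-verified Lean document; each statement's English description precedes it below -/
import Mathlib

section
/- Let V be an n-dimensional complex vector space and K ⊆ ∧²V a subspace of dimension 2n−3. Then for every 0 ≤ q ≤ n−4 the Koszul module component W_q(V,K) = Coker(∧³V ⊗ Sym^{q−1}V → (∧²V/K) ⊗ Sym^q V) is nonzero. -/
noncomputable section

set_option synthInstance.maxHeartbeats 1000000
set_option maxHeartbeats 2000000

/-- `V`: an `n`-dimensional complex vector space. -/
abbrev Vv (n : ℕ) : Type := Fin n → ℂ

/-- Monomials of degree `q` in `n` variables: the standard basis of `Sym^q V`. -/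
abbrev Mon (n q : ℕ) : Type := {d : Fin n →₀ ℕ // (d.sum fun _ e => e) = q}

/-- A concrete model of `Sym^q V`, the degree-`q` graded piece of the symmetric algebra
`S = Sym V`:  coordinates with respect to the monomial basis. -/
abbrev SymV (n q : ℕ) : Type := Mon n q → ℂ

lemma mon_sub_deg {n q : ℕ} (i : Fin n) (d : Mon n (q + 1)) (h : d.1 i ≠ 0) :
    ((d.1 - Finsupp.single i 1).sum fun _ e => e) = q := by
  have hle : Finsupp.single i 1 ≤ d.1 := by
    rw [Finsupp.single_le_iff]
    omega
  have hadd : (d.1 - Finsupp.single i 1) + Finsupp.single i 1 = d.1 :=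
    tsub_add_cancel_of_le hle
  have hsum := Finsupp.sum_add_index' (f := d.1 - Finsupp.single i 1)
    (g := Finsupp.single i 1) (h := fun _ (e : ℕ) => e) (fun _ => rfl) (fun _ _ _ => rfl)
  rw [hadd, Finsupp.sum_single_index rfl] at hsum
  have := d.2
  omega

/-- Multiplication by the variable `X i`, as a linear map `Sym^q V → Sym^{q+1} V`. -/
def mulX (n q : ℕ) (i : Fin n) : SymV n q →ₗ[ℂ] SymV n (q + 1) where
  toFun f := fun d => if h : d.1 i ≠ 0 then f ⟨d.1 - Finsupp.single i 1, mon_sub_deg i d h⟩ else 0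
  map_add' f g := by
    funext d
    by_cases h : d.1 i = 0 <;> simp [h]
  map_smul' c f := by
    funext d
    by_cases h : d.1 i = 0 <;> simp [h]

/-- Multiplication `V × Sym^q V → Sym^{q+1} V`, `(v, f) ↦ v·f`, as a bilinear map. -/
def mulBil (n q : ℕ) : Vv n →ₗ[ℂ] SymV n q →ₗ[ℂ] SymV n (q + 1) where
  toFun v := ∑ i, v i • mulX n q i
  map_add' v w := by
    simp [add_smul, Finset.sum_add_distrib]
  map_smul' c v := by
    simp [Finset.smul_sum, smul_smul]

/-- The index set for the standard basis `e_i ∧ e_j`, `i < j`, of `⋀²V`. -/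
abbrev PairIdx (n : ℕ) : Type := {p : Fin n × Fin n // p.1 < p.2}

/-- A concrete model of the exterior square `⋀²V` of `V = ℂⁿ`:  coordinates with respect
to the standard basis `e_i ∧ e_j`, `i < j`. -/
abbrev Wedge2 (n : ℕ) : Type := PairIdx n → ℂ

/-- A concrete model of `V ⊗ Sym^q V`. -/
abbrev TV (n q : ℕ) : Type := Fin n → SymV n q

/-- A concrete model of `⋀²V ⊗ Sym^q V`. -/
abbrev TW (n q : ℕ) : Type := PairIdx n → SymV n q

/-- The Koszul differential `δ_{1,q} : V ⊗ Sym^q V → Sym^{q+1} V`, `v ⊗ f ↦ v·f`. -/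
def delta1 (n q : ℕ) : TV n q →ₗ[ℂ] SymV n (q + 1) :=
  LinearMap.lsum ℂ (fun _ : Fin n => SymV n q) ℂ (fun i => mulX n q i)

/-- The coefficient of `e_i ⊗ (-)` in `δ₂(e_{p₁} ∧ e_{p₂} ⊗ (-))`. -/
def coeff2 (n q : ℕ) (i : Fin n) (p : PairIdx n) : SymV n q →ₗ[ℂ] SymV n (q + 1) :=
  if p.1.1 = i then mulX n q p.1.2 else if p.1.2 = i then -(mulX n q p.1.1) else 0

/-- The Koszul differential `δ_{2,q} : ⋀²V ⊗ Sym^q V → V ⊗ Sym^{q+1} V`,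
`u ∧ w ⊗ f ↦ u ⊗ (w·f) - w ⊗ (u·f)`. -/
def delta2 (n q : ℕ) : TW n q →ₗ[ℂ] TV n (q + 1) :=
  LinearMap.pi (fun i =>
    LinearMap.lsum ℂ (fun _ : PairIdx n => SymV n q) ℂ (fun p => coeff2 n q i p))

/-- The subspace of `⋀²V ⊗ Sym^q V` corresponding to `K ⊗ Sym^q V`, for a subspace
`K ⊆ ⋀²V`. -/
def KTen (n q : ℕ) (K : Submodule ℂ (Wedge2 n)) : Submodule ℂ (TW n q) :=
  Submodule.span ℂ {g | ∃ k ∈ K, ∃ f : SymV n q, g = fun p => k p • f}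

/-- The image `δ_{2,q}(K ⊗ Sym^q V)`, viewed as a submodule of `Im δ_{2,q}`. -/
def WqSub (n q : ℕ) (K : Submodule ℂ (Wedge2 n)) :
    Submodule ℂ ↥(LinearMap.range (delta2 n q)) :=
  Submodule.comap (LinearMap.range (delta2 n q)).subtype
    (Submodule.map (delta2 n q) (KTen n q K))

/-- The degree-`q` graded piece `W_q(V,K) = Im(δ_{2,q}) / δ_{2,q}(K ⊗ Sym^q V)` of the
Koszul module `W(V,K)` associated to the pair `(V,K)`. -/
abbrev Wq (n q : ℕ) (K : Submodule ℂ (Wedge2 n)) : Type :=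
  ↥(LinearMap.range (delta2 n q)) ⧸ WqSub n q K

/-- The standard basis vector `e_i` of `V`. -/
def stdBasis (n : ℕ) (i : Fin n) : Vv n := Pi.single i 1

/-- For `a, b ∈ V^∨`, the linear functional on `⋀²V` corresponding to the decomposable
element `a ∧ b ∈ ⋀²(V^∨) ≅ (⋀²V)^∨`. -/
def phiForm (n : ℕ) (a b : Module.Dual ℂ (Vv n)) : Module.Dual ℂ (Wedge2 n) where
  toFun w := ∑ p : PairIdx n,
    w p * (a (stdBasis n p.1.1) * b (stdBasis n p.1.2) -
      a (stdBasis n p.1.2) * b (stdBasis n p.1.1))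
  map_add' w w' := by
    simp [add_mul, Finset.sum_add_distrib]
  map_smul' c w := by
    simp [Finset.mul_sum, mul_assoc]

/-- The resonance variety `R(V,K) ⊆ V^∨` of a pair `(V,K)`:  the set of those `a` for
which there exists `b` with `a ∧ b ∈ K^⊥ ∖ {0}`, together with `0`.  Here
`K^⊥ ⊆ (⋀²V)^∨` is the annihilator of `K`, i.e. the space of forms vanishing
identically on `K`. -/
def Res (n : ℕ) (K : Submodule ℂ (Wedge2 n)) : Set (Module.Dual ℂ (Vv n)) :=
  {a | ∃ b, phiForm n a b ∈ Submodule.dualAnnihilator K ∧ phiForm n a b ≠ 0} ∪ {0}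

/-- Multiplication by `v ∈ V`, as a map `⋀²V ⊗ Sym^q V → ⋀²V ⊗ Sym^{q+1} V`
(identity on the `⋀²V` factor). -/
def mulVW (n q : ℕ) (v : Vv n) : TW n q →ₗ[ℂ] TW n (q + 1) :=
  LinearMap.pi (fun p => (mulBil n q v).comp (LinearMap.proj p))

/-!
`W_q(V,K)` is nonzero as soon as `dim δ₂(K ⊗ Sym^q V) < rank δ_{2,q}`. The left side is at most
`(2n-3) · C(n+q-1, q)`. For the right side, the vectors `δ₂(e_i ∧ e_j ⊗ m)` with `i < j` and `m`
a monomial in `x_0, …, x_j` are linearly independent: the coordinate `e_i ⊗ x_j m` is `1` on this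
vector and vanishes on every other one whose `i` is not smaller, because `x_j m` determines `j`
and `m`. There are `∑_{j<n} j · C(j+q, q) = (q+1) · C(n+q, q+2)` of them, which beats the bound
on the left side exactly when `(n-2)(n-3-q) > 0`.
-/

open Finset Module
open scoped TensorProduct

theorem LinearIndependent.of_pivots {ι R M : Type*} [Fintype ι] [CommRing R] [NoZeroDivisors R]
    [AddCommGroup M] [Module R M] (v : ι → M) (f : ι → Dual R M) (rank : ι → ℕ)
    (hdiag : ∀ s, f s (v s) ≠ 0) (hoff : ∀ s t, t ≠ s → rank s ≤ rank t → f s (v t) = 0) :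
    LinearIndependent R v := by
  rw [Fintype.linearIndependent_iff]
  intro g hg s
  induction hs : rank s using Nat.strong_induction_on generalizing s with
  | _ r ih =>
    have hsum : ∑ t, g t * f s (v t) = 0 := by
      simpa only [map_sum, map_smul, smul_eq_mul, map_zero] using congrArg (f s) hg
    rw [Finset.sum_eq_single s (fun t _ hts => ?_) (by simp)] at hsum
    · exact (mul_eq_zero.mp hsum).resolve_right (hdiag s)
    · rcases lt_or_ge (rank t) r with hlt | hge
      · rw [ih _ hlt t rfl, zero_mul]
      · rw [hoff s t hts (hs ▸ hge), mul_zero]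

theorem Submodule.nontrivial_quotient_comap_subtype_of_finrank_lt {K M : Type*} [Field K]
    [AddCommGroup M] [Module K M] [FiniteDimensional K M] {N P : Submodule K M}
    (h : finrank K P < finrank K N) : Nontrivial (N ⧸ P.comap N.subtype) := by
  rw [Submodule.Quotient.nontrivial_iff, Ne, Submodule.comap_subtype_eq_top]
  exact fun hle => (Submodule.finrank_mono hle).not_gt h

-- `Sym.equivNatSum` with the summand written as in `Mon`, so that instances found for one form
-- apply to the other.
def Sym.equivFinsuppSumEq (σ : Type*) [DecidableEq σ] (q : ℕ) :
    Sym σ q ≃ {d : σ →₀ ℕ // (d.sum fun _ e => e) = q} :=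
  Sym.equivNatSum σ q

noncomputable instance {σ : Type*} [Fintype σ] [DecidableEq σ] (q : ℕ) :
    Fintype {d : σ →₀ ℕ // (d.sum fun _ e => e) = q} :=
  Fintype.ofEquiv _ (Sym.equivFinsuppSumEq σ q)

theorem card_finsupp_sum_eq {σ : Type*} [Fintype σ] [DecidableEq σ] (q : ℕ) :
    Fintype.card {d : σ →₀ ℕ // (d.sum fun _ e => e) = q} = (Fintype.card σ + q - 1).choose q := by
  rw [← Fintype.card_congr (Sym.equivFinsuppSumEq σ q), Sym.card_sym_eq_choose]

theorem sum_range_mul_choose (q : ℕ) :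
    ∀ N : ℕ, ∑ j ∈ range N, j * (j + q).choose q = (q + 1) * (N + q).choose (q + 2)
  | 0 => by simp [Nat.choose_eq_zero_of_lt]
  | N + 1 => by
    have hN : N * (N + q).choose q = (q + 1) * (N + q).choose (q + 1) := by
      have := Nat.choose_succ_right_eq (N + q) q
      rw [Nat.add_sub_cancel] at this
      linarith
    rw [sum_range_succ, sum_range_mul_choose q N, hN, Nat.add_right_comm,
      Nat.choose_succ_succ' (N + q) (q + 1)]
    ring

theorem add_two_mul_add_one_mul_choose (m q : ℕ) :
    (q + 2) * ((q + 1) * (m + q + 1).choose (q + 2)) = (m + q + 1) * m * (m + q).choose q := by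
  have h1 := Nat.add_one_mul_choose_eq (m + q) (q + 1)
  have h2 := Nat.choose_succ_right_eq (m + q) q
  rw [Nat.add_sub_cancel] at h2
  calc _ = (q + 1) * ((m + q + 1).choose (q + 1 + 1) * (q + 1 + 1)) := by ring
    _ = (m + q + 1) * ((m + q).choose (q + 1) * (q + 1)) := by rw [← h1]; ring
    _ = _ := by rw [h2]; ring

theorem mul_choose_lt_mul_choose {n q : ℕ} (hq : q + 4 ≤ n) :
    (2 * n - 3) * (n + q - 1).choose q < (q + 1) * (n + q).choose (q + 2) := by
  obtain ⟨t, rfl⟩ : ∃ t, n = q + 4 + t := ⟨n - q - 4, by omega⟩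
  rw [show 2 * (q + 4 + t) - 3 = 2 * q + 2 * t + 5 by omega,
    show q + 4 + t + q - 1 = q + 3 + t + q by omega,
    show q + 4 + t + q = q + 3 + t + q + 1 by omega]
  refine Nat.lt_of_mul_lt_mul_left (a := q + 2) ?_
  rw [add_two_mul_add_one_mul_choose]
  have hpos : 0 < (q + 3 + t + q).choose q := Nat.choose_pos (by omega)
  generalize (q + 3 + t + q).choose q = C at hpos ⊢
  -- the difference of the two sides is `(t ^ 2 + q t + 3 t + q + 2) C`
  nlinarith [Nat.mul_le_mul_right C (Nat.le_add_right 1 (q + q * t + 3 * t + t * t))]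

def Mon.mulVar {n q : ℕ} (j : Fin n) (m : Mon n q) : Mon n (q + 1) :=
  ⟨m.1 + Finsupp.single j 1, by
    rw [Finsupp.sum_add_index' (fun _ => rfl) (fun _ _ _ => rfl), Finsupp.sum_single_index rfl,
      m.2]⟩

theorem Mon.mk_sub_single_eq_iff {n q : ℕ} {j : Fin n} {d : Mon n (q + 1)} (h : d.1 j ≠ 0)
    (m : Mon n q) : (⟨d.1 - Finsupp.single j 1, mon_sub_deg j d h⟩ : Mon n q) = m ↔
      d = Mon.mulVar j m := by
  have hle : Finsupp.single j 1 ≤ d.1 := Finsupp.single_le_iff.mpr (Nat.one_le_iff_ne_zero.mpr h)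
  rw [Subtype.ext_iff, Subtype.ext_iff, tsub_eq_iff_eq_add_of_le hle]
  rfl

theorem mulX_single_one {n q : ℕ} (j : Fin n) (m : Mon n q) :
    mulX n q j (Pi.single m 1) = Pi.single (Mon.mulVar j m) 1 := by
  funext d
  by_cases h : d.1 j = 0
  · have hd : d ≠ Mon.mulVar j m := by
      rintro rfl
      simp [Mon.mulVar] at h
    simp [mulX, h, hd]
  · simp [mulX, h, Pi.single_apply, Mon.mk_sub_single_eq_iff h]

theorem delta2_single {n q : ℕ} (p : PairIdx n) (x : SymV n q) (i : Fin n) :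
    delta2 n q (Pi.single p x) i = coeff2 n q i p x := by
  simp [delta2, Pi.single_apply, apply_ite]

theorem delta2_single_single_apply {n q : ℕ} (p : PairIdx n) (m : Mon n q) (i : Fin n)
    (d : Mon n (q + 1)) :
    delta2 n q (Pi.single p (Pi.single m 1)) i d =
      (if p.1.1 = i ∧ d = Mon.mulVar p.1.2 m then 1 else 0) -
        (if p.1.2 = i ∧ d = Mon.mulVar p.1.1 m then 1 else 0) := by
  rw [delta2_single, coeff2]
  have hp : p.1.1 ≠ p.1.2 := p.2.ne
  by_cases h1 : p.1.1 = i
  · subst h1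
    simp [mulX_single_one, Pi.single_apply, hp.symm]
  · by_cases h2 : p.1.2 = i
    · subst h2
      simp [mulX_single_one, Pi.single_apply, h1]
    · simp [h1, h2]

theorem Mon.mulVar_inj {n q : ℕ} {j j' : Fin n} {m m' : Mon n q}
    (hm : ∀ k, m.1 k ≠ 0 → k ≤ j) (hm' : ∀ k, m'.1 k ≠ 0 → k ≤ j')
    (h : Mon.mulVar j m = Mon.mulVar j' m') : j = j' ∧ m = m' := by
  have h1 : m.1 + Finsupp.single j 1 = m'.1 + Finsupp.single j' 1 := congrArg Subtype.val h
  obtain rfl : j = j' := by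
    by_contra hne
    have e1 := DFunLike.congr_fun h1 j
    have e2 := DFunLike.congr_fun h1 j'
    simp only [Finsupp.add_apply, Finsupp.single_apply, hne, Ne.symm hne, if_true,
      if_false] at e1 e2
    exact hne (le_antisymm (hm' j (by omega)) (hm j' (by omega)))
  exact ⟨rfl, Subtype.ext (add_right_cancel h1)⟩

abbrev MonUpTo (n q : ℕ) (j : Fin n) : Type := {m : Mon n q // ∀ k, m.1 k ≠ 0 → k ≤ j}

-- `⟨j, i, m⟩` stands for `e_i ∧ e_j ⊗ m`, where `i < j` and `m` is a monomial in `x_0, …, x_j`.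
abbrev PivotIdx (n q : ℕ) : Type := Σ j : Fin n, Fin j × MonUpTo n q j

def PivotIdx.lo {n q : ℕ} (s : PivotIdx n q) : Fin n := Fin.castLT s.2.1 (s.2.1.2.trans s.1.2)

def PivotIdx.pair {n q : ℕ} (s : PivotIdx n q) : PairIdx n := ⟨(s.lo, s.1), s.2.1.2⟩

def pivotVec {n q : ℕ} (s : PivotIdx n q) : TV n (q + 1) :=
  delta2 n q (Pi.single s.pair (Pi.single s.2.2.1 1))

def pivotCoord {n q : ℕ} (s : PivotIdx n q) : Dual ℂ (TV n (q + 1)) :=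
  (LinearMap.proj (R := ℂ) (φ := fun _ => ℂ) (Mon.mulVar s.1 s.2.2.1)).comp
    (LinearMap.proj (R := ℂ) (φ := fun _ => SymV n (q + 1)) s.lo)

theorem pivotCoord_pivotVec {n q : ℕ} (s t : PivotIdx n q) :
    pivotCoord s (pivotVec t) =
      (if t.lo = s.lo ∧ Mon.mulVar s.1 s.2.2.1 = Mon.mulVar t.1 t.2.2.1 then 1 else 0) -
        (if t.1 = s.lo ∧ Mon.mulVar s.1 s.2.2.1 = Mon.mulVar t.lo t.2.2.1 then 1 else 0) :=
  delta2_single_single_apply t.pair t.2.2.1 s.lo (Mon.mulVar s.1 s.2.2.1)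

theorem linearIndependent_pivotVec (n q : ℕ) :
    LinearIndependent ℂ (pivotVec (n := n) (q := q)) := by
  refine LinearIndependent.of_pivots _ pivotCoord (fun s => s.2.1) (fun s => ?_)
    (fun s t hts hst => ?_)
  · have : s.1 ≠ s.lo := s.pair.2.ne'
    simp [pivotCoord_pivotVec, this]
  · have hlo : ¬ t.1 = s.lo := fun h => by
      have : (t.2.1 : ℕ) < t.1 := t.2.1.2
      simp only [Fin.ext_iff, PivotIdx.lo, Fin.val_castLT] at h
      omega
    rw [pivotCoord_pivotVec, if_neg (c := t.1 = s.lo ∧ _) (fun h => hlo h.1), sub_zero, if_neg]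
    rintro ⟨hi, hm⟩
    obtain ⟨hj, hm⟩ := Mon.mulVar_inj s.2.2.2 t.2.2.2 hm
    obtain ⟨j, i, m⟩ := s
    obtain ⟨j', i', m'⟩ := t
    obtain rfl : j = j' := hj
    obtain rfl : i = i' := Fin.ext (by simpa [PivotIdx.lo, Fin.ext_iff] using hi.symm)
    obtain rfl : m = m' := Subtype.ext hm
    exact hts rfl

theorem card_pivotIdx_le_finrank_range_delta2 (n q : ℕ) :
    Fintype.card (PivotIdx n q) ≤ finrank ℂ (LinearMap.range (delta2 n q)) := by
  rw [← finrank_span_eq_card (linearIndependent_pivotVec n q)]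
  exact Submodule.finrank_mono
    (Submodule.span_le.mpr (Set.range_subset_iff.mpr fun s => ⟨_, rfl⟩))

def monUpToEquiv (n q : ℕ) (j : Fin n) :
    MonUpTo n q j ≃ {d : Set.Iic j →₀ ℕ // (d.sum fun _ e => e) = q} :=
  (Equiv.subtypeSubtypeEquivSubtypeInter (fun d : Fin n →₀ ℕ => (d.sum fun _ e => e) = q)
      (fun d => ∀ k, d k ≠ 0 → k ≤ j)).trans <|
    (Equiv.subtypeEquivRight fun d => by
      simp only [Set.subset_def, Finset.mem_coe, Finsupp.mem_support_iff, Set.mem_Iic]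
      exact and_comm).trans <|
    (Equiv.subtypeSubtypeEquivSubtypeInter (fun d : Fin n →₀ ℕ => ↑d.support ⊆ Set.Iic j)
      (fun d => (d.sum fun _ e => e) = q)).symm.trans <|
    (Finsupp.restrictSupportEquiv (Set.Iic j) ℕ).subtypeEquiv fun d => by
      rw [Finsupp.restrictSupportEquiv_apply,
        Finsupp.sum_subtypeDomain_index (p := (· ∈ Set.Iic j)) (h := fun _ e => e) d.2]

theorem card_monUpTo (n q : ℕ) (j : Fin n) : Fintype.card (MonUpTo n q j) = (j + q).choose q := by
  classical
  rw [Fintype.card_congr (monUpToEquiv n q j), card_finsupp_sum_eq]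
  simp

theorem card_pivotIdx (n q : ℕ) :
    Fintype.card (PivotIdx n q) = (q + 1) * (n + q).choose (q + 2) := by
  simp only [Fintype.card_sigma, Fintype.card_prod, Fintype.card_fin, card_monUpTo]
  rw [Fin.sum_univ_eq_sum_range (fun j => j * (j + q).choose q), sum_range_mul_choose]

def kTensorMul (n q : ℕ) (K : Submodule ℂ (Wedge2 n)) : K →ₗ[ℂ] SymV n q →ₗ[ℂ] TW n q :=
  LinearMap.mk₂ ℂ (fun k f p => (k : Wedge2 n) p • f)
    (fun _ _ _ => by ext; simp [add_mul]) (fun _ _ _ => by ext; simp [mul_assoc])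
    (fun _ _ _ => by ext; simp [mul_add]) (fun _ _ _ => by ext; simp [mul_left_comm])

theorem KTen_le_range_lift (n q : ℕ) (K : Submodule ℂ (Wedge2 n)) :
    KTen n q K ≤ LinearMap.range (TensorProduct.lift (kTensorMul n q K)) := by
  rw [KTen, Submodule.span_le]
  rintro _ ⟨k, hk, f, rfl⟩
  exact ⟨⟨k, hk⟩ ⊗ₜ f, rfl⟩

theorem finrank_KTen_le (n q : ℕ) (K : Submodule ℂ (Wedge2 n)) :
    finrank ℂ (KTen n q K) ≤ finrank ℂ K * (n + q - 1).choose q :=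
  calc finrank ℂ (KTen n q K)
      ≤ finrank ℂ (LinearMap.range (TensorProduct.lift (kTensorMul n q K))) :=
        Submodule.finrank_mono (KTen_le_range_lift n q K)
    _ ≤ finrank ℂ (K ⊗[ℂ] SymV n q) := LinearMap.finrank_range_le _
    _ = finrank ℂ K * (n + q - 1).choose q := by
        rw [finrank_tensorProduct, finrank_fintype_fun_eq_card, card_finsupp_sum_eq,
          Fintype.card_fin]

/-- If `V` is `n`-dimensional and `K ⊆ ⋀²V` has dimension `2n−3`, then
`W_q(V,K) ≠ 0` for every `0 ≤ q ≤ n−4`. -/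
theorem Wq_nontrivial_of_dim_eq (n q : ℕ) (hn : 4 ≤ n) (K : Submodule ℂ (Wedge2 n))
    (hK : Module.finrank ℂ K = 2 * n - 3) (hq : q ≤ n - 4) :
    Nontrivial (Wq n q K) :=
  Submodule.nontrivial_quotient_comap_subtype_of_finrank_lt <|
    calc finrank ℂ (Submodule.map (delta2 n q) (KTen n q K))
        ≤ finrank ℂ (KTen n q K) := Submodule.finrank_map_le _ _
      _ ≤ (2 * n - 3) * (n + q - 1).choose q := hK ▸ finrank_KTen_le n q K
      _ < (q + 1) * (n + q).choose (q + 2) := mul_choose_lt_mul_choose (by omega)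
      _ = Fintype.card (PivotIdx n q) := (card_pivotIdx n q).symm
      _ ≤ finrank ℂ (LinearMap.range (delta2 n q)) := card_pivotIdx_le_finrank_range_delta2 n q
end
end

section
/- Let V be an n-dimensional complex vector space with basis, K ⊆ ∧²V, and suppose a ∈ V* is a nonzero element of the resonance variety R(V,K), i.e., there is b ∈ V* with a∧b ∈ K^⊥ \ {0}. Then for every q ≥ 0 the component W_q(V,K) of the Koszul module is nonzero; in particular W(V,K) is infinite-dimensional. -/
noncomputable section

set_option synthInstance.maxHeartbeats 1000000
set_option maxHeartbeats 2000000

open DirectSum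


/-! Evaluate the `Sym` factor at the point `a ∈ V^∨` and pair the `V` factor with `b`: the
resulting functional on `V ⊗ Sym^{q+1} V` sends `δ₂ x` to `-(a ∧ b)(x(a))`. As `a ∧ b ∈ K^⊥` it
kills `δ₂(K ⊗ Sym^q V)`, while on `δ₂(w ⊗ f)` it is `-(a ∧ b)(w) f(a)`, which is nonzero for
suitable `w` and `f` because `a ∧ b ≠ 0` and `a ≠ 0`. So no `W_q` vanishes, and a direct sum of
infinitely many nonzero vector spaces is infinite-dimensional. -/

instance (n q : ℕ) : Finite (Mon n q) := (Finsupp.finite_of_degree_eq q).to_subtype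

instance (n q : ℕ) : Fintype (Mon n q) := Fintype.ofFinite _

section Monomials

variable {n q : ℕ}

def monMulX (i : Fin n) (c : Mon n q) : Mon n (q + 1) :=
  ⟨c.1 + Finsupp.single i 1, by
    change Finsupp.degree _ = _
    rw [map_add, Finsupp.degree_single]
    exact congrArg (· + 1) c.2⟩

lemma monMulX_injective (i : Fin n) : Function.Injective (monMulX (q := q) i) :=
  fun _ _ h => Subtype.ext (add_right_cancel (congrArg Subtype.val h))

lemma mulX_monMulX (i : Fin n) (f : SymV n q) (c : Mon n q) :
    mulX n q i f (monMulX i c) = f c := by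
  have hi : (monMulX i c).1 i ≠ 0 := by simp [monMulX]
  simp only [mulX, LinearMap.coe_mk, AddHom.coe_mk, dif_pos hi]
  congr
  exact add_tsub_cancel_right _ _

lemma mulX_apply_of_notMem_range (i : Fin n) (f : SymV n q) {d : Mon n (q + 1)}
    (hd : d ∉ Set.range (monMulX i)) : mulX n q i f d = 0 := by
  have hi : ¬ d.1 i ≠ 0 := fun hi =>
    have hle : Finsupp.single i 1 ≤ d.1 :=
      Finsupp.single_le_iff.mpr (Nat.one_le_iff_ne_zero.mpr hi)
    hd ⟨⟨d.1 - Finsupp.single i 1, mon_sub_deg i d hi⟩, Subtype.ext (tsub_add_cancel_of_le hle)⟩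
  simp only [mulX, LinearMap.coe_mk, AddHom.coe_mk, dif_neg hi]

end Monomials

section Evaluation

variable {n q : ℕ} (a : Module.Dual ℂ (Vv n))

def monomialValue (d : Mon n q) : ℂ :=
  d.1.prod fun j e => a (stdBasis n j) ^ e

lemma monomialValue_monMulX (i : Fin n) (c : Mon n q) :
    monomialValue a (monMulX i c) = monomialValue a c * a (stdBasis n i) := by
  rw [monomialValue, monMulX,
    Finsupp.prod_add_index' (fun _ => pow_zero _) (fun _ _ _ => pow_add _ _ _),
    Finsupp.prod_single_index (h := fun j e => a (stdBasis n j) ^ e) (pow_zero _), pow_one]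
  rfl

def evalSym : SymV n q →ₗ[ℂ] ℂ where
  toFun f := ∑ d, f d * monomialValue a d
  map_add' f g := by simp [add_mul, Finset.sum_add_distrib]
  map_smul' c f := by simp [Finset.mul_sum, mul_assoc]

lemma evalSym_apply (f : SymV n q) : evalSym a f = ∑ d, f d * monomialValue a d := rfl

lemma evalSym_mulX (i : Fin n) (f : SymV n q) :
    evalSym a (mulX n q i f) = a (stdBasis n i) * evalSym a f := by
  rw [evalSym_apply, evalSym_apply, Finset.mul_sum]
  refine (Fintype.sum_of_injective _ (monMulX_injective i) _ _ (fun d hd => ?_) fun c => ?_).symm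
  · rw [mulX_apply_of_notMem_range i f hd, zero_mul]
  · rw [mulX_monMulX, monomialValue_monMulX]
    ring

lemma exists_apply_stdBasis_ne_zero {a : Module.Dual ℂ (Vv n)} (ha : a ≠ 0) :
    ∃ i, a (stdBasis n i) ≠ 0 := by
  by_contra! h
  exact ha ((Pi.basisFun ℂ (Fin n)).ext fun i => by simpa [stdBasis] using h i)

lemma exists_evalSym_ne_zero {a : Module.Dual ℂ (Vv n)} (ha : a ≠ 0) :
    ∃ f : SymV n q, evalSym a f ≠ 0 := by
  classical
  obtain ⟨i, hi⟩ := exists_apply_stdBasis_ne_zero ha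
  let d : Mon n q := ⟨Finsupp.single i q, Finsupp.degree_single i q⟩
  refine ⟨Pi.single d 1, ?_⟩
  have hd : monomialValue a d = a (stdBasis n i) ^ q :=
    Finsupp.prod_single_index (pow_zero _)
  simpa [evalSym_apply, Pi.single_apply, hd] using pow_ne_zero q hi

end Evaluation

section TestForm

variable {n q : ℕ} (a b : Module.Dual ℂ (Vv n))

def evalTW : TW n q →ₗ[ℂ] Wedge2 n :=
  LinearMap.pi fun p => (evalSym a).comp (LinearMap.proj p)

lemma evalTW_mem_of_mem_KTen {K : Submodule ℂ (Wedge2 n)} {x : TW n q} (hx : x ∈ KTen n q K) :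
    evalTW a x ∈ K := by
  suffices KTen n q K ≤ K.comap (evalTW a) from this hx
  refine Submodule.span_le.mpr ?_
  rintro _ ⟨k, hk, f, rfl⟩
  have hkf : evalTW a (fun p => k p • f) = evalSym a f • k := by
    ext p
    simp [evalTW, mul_comm]
  simpa [hkf] using K.smul_mem (evalSym a f) hk

def testForm : TV n (q + 1) →ₗ[ℂ] ℂ :=
  ∑ i, b (stdBasis n i) • (evalSym a).comp (LinearMap.proj i)

lemma testForm_apply (g : TV n (q + 1)) :
    testForm a b g = ∑ i, b (stdBasis n i) * evalSym a (g i) := by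
  simp [testForm]

lemma delta2_apply (x : TW n q) (i : Fin n) :
    delta2 n q x i = ∑ p, coeff2 n q i p (x p) := by
  simp [delta2]

lemma evalSym_coeff2 (i : Fin n) (p : PairIdx n) (f : SymV n q) :
    evalSym a (coeff2 n q i p f) =
      (if p.1.1 = i then a (stdBasis n p.1.2) else if p.1.2 = i then -a (stdBasis n p.1.1)
        else 0) * evalSym a f := by
  unfold coeff2
  split_ifs <;> simp [evalSym_mulX]

lemma testForm_delta2 (x : TW n q) :
    testForm a b (delta2 n q x) = -phiForm n a b (evalTW a x) := by
  have hpair : ∀ p : PairIdx n, ∑ i, b (stdBasis n i) *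
      ((if p.1.1 = i then a (stdBasis n p.1.2) else if p.1.2 = i then -a (stdBasis n p.1.1)
        else 0) * evalSym a (x p)) =
      -((a (stdBasis n p.1.1) * b (stdBasis n p.1.2) -
        a (stdBasis n p.1.2) * b (stdBasis n p.1.1)) * evalSym a (x p)) := by
    intro p
    have hp : p.1.1 ≠ p.1.2 := p.2.ne
    rw [Fintype.sum_eq_add _ _ hp fun i hi => by simp [hi.1.symm, hi.2.symm]]
    simp only [↓reduceIte, hp, neg_mul, mul_neg]
    ring
  simp only [testForm_apply, delta2_apply, map_sum, evalSym_coeff2, Finset.mul_sum]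
  rw [Finset.sum_comm]
  simp only [hpair, phiForm, evalTW, LinearMap.coe_mk, AddHom.coe_mk, LinearMap.pi_apply,
    LinearMap.comp_apply, LinearMap.proj_apply, Finset.sum_neg_distrib, mul_comm]

end TestForm

lemma testForm_delta2_eq_zero_of_mem_KTen {n q : ℕ} {K : Submodule ℂ (Wedge2 n)}
    {a b : Module.Dual ℂ (Vv n)} (hmem : phiForm n a b ∈ K.dualAnnihilator)
    {x : TW n q} (hx : x ∈ KTen n q K) : testForm a b (delta2 n q x) = 0 := by
  rw [testForm_delta2, (Submodule.mem_dualAnnihilator _).mp hmem _ (evalTW_mem_of_mem_KTen a hx),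
    neg_zero]

lemma WqSub_ne_top {n q : ℕ} {K : Submodule ℂ (Wedge2 n)} {a b : Module.Dual ℂ (Vv n)}
    (ha : a ≠ 0) (hmem : phiForm n a b ∈ K.dualAnnihilator) (hne : phiForm n a b ≠ 0) :
    WqSub n q K ≠ ⊤ := by
  obtain ⟨w, hw⟩ : ∃ w, phiForm n a b w ≠ 0 := DFunLike.ne_iff.mp hne
  obtain ⟨f, hf⟩ : ∃ f : SymV n q, evalSym a f ≠ 0 := exists_evalSym_ne_zero ha
  let x : TW n q := fun p => w p • f
  have hx : testForm a b (delta2 n q x) ≠ 0 := by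
    have hev : evalTW a x = evalSym a f • w := by
      ext p
      simp [x, evalTW, mul_comm]
    rw [testForm_delta2, hev, map_smul, smul_eq_mul, neg_ne_zero]
    exact mul_ne_zero hf hw
  intro htop
  have hmemx : (⟨delta2 n q x, x, rfl⟩ : LinearMap.range (delta2 n q)) ∈ WqSub n q K :=
    htop ▸ Submodule.mem_top
  obtain ⟨z, hz, hzx⟩ := Submodule.mem_comap.mp hmemx
  exact hx (hzx ▸ testForm_delta2_eq_zero_of_mem_KTen hmem hz)

theorem DirectSum.not_finite_of_nontrivial {K ι : Type*} [DivisionRing K] [Infinite ι]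
    (M : ι → Type*) [∀ i, AddCommGroup (M i)] [∀ i, Module K (M i)] [∀ i, Nontrivial (M i)] :
    ¬ Module.Finite K (⨁ i, M i) := by
  intro hfin
  have hrank : Cardinal.sum (fun _ : ι => 1) ≤ Module.rank K (⨁ i, M i) := by
    rw [rank_directSum]
    exact Cardinal.sum_le_sum _ _ fun i => Cardinal.one_le_iff_pos.mpr rank_pos
  refine (Module.rank_lt_aleph0 K _).not_ge (le_trans ?_ hrank)
  simp

/-- If `a ∈ V^∨` is a nonzero element of the resonance variety
`R(V,K)`, i.e. there is `b ∈ V^∨` with `a ∧ b ∈ K^⊥ ∖ {0}`, then every graded component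
`W_q(V,K)` of the Koszul module is nonzero; in particular `W(V,K) = ⊕_q W_q(V,K)` is
infinite-dimensional. -/
theorem Wq_nontrivial_of_resonance (n : ℕ) (K : Submodule ℂ (Wedge2 n))
    (a b : Module.Dual ℂ (Vv n)) (ha : a ≠ 0)
    (hmem : phiForm n a b ∈ Submodule.dualAnnihilator K)
    (hne : phiForm n a b ≠ 0) :
    (∀ q : ℕ, Nontrivial (Wq n q K)) ∧
      ¬ Module.Finite ℂ (⨁ q : ℕ, Wq n q K) := by
  have hnt (q : ℕ) : Nontrivial (Wq n q K) :=
    Submodule.Quotient.nontrivial_iff.mpr (WqSub_ne_top ha hmem hne)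
  exact ⟨hnt, DirectSum.not_finite_of_nontrivial (K := ℂ) fun q => Wq n q K⟩
end
end
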